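/- Let M be a t × t matrix over Z_m with all diagonal entries equal to zero, and let s be a divisor of m such that colrank(M^(s)) ≤ 2, where M^(s) is the matrix M with entries reduced modulo s. Then there exists a set S of at least t/m^2 indices such that the S × S submatrix of M is the all-zero matrix modulo s. -/
import Mathlib


/-- The column rank of a square matrix over `ZMod s`: `log_s` of the size of the additive
subgroup generated by the columns of `M`. -/
noncomputable def colrank {s t : ℕ} (M : Matrix (Fin t) (Fin t) (ZMod s)) : ℝ :=
  Real.logb (s : ℝ)
    (((AddSubgroup.closure (Set.range fun j => fun i => M i j) :
      AddSubgroup (Fin t → ZMod s)) : Set (Fin t → ZMod s)).ncard : ℝ)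

/-- Claim 4.7: if `M` has zero diagonal and `colrank(M mod s) ≤ 2`, then there is a set of
at least `t/m²` indices on which `M` is the all-zero matrix modulo `s`. -/
theorem zero_submatrix_of_small_colrank (m t s : ℕ) (hm : 2 ≤ m) (hs : s ∣ m)
    (M : Matrix (Fin t) (Fin t) (ZMod m)) (hdiag : ∀ i, M i i = 0)
    (hcr : colrank (M.map fun x => (ZMod.cast x : ZMod s)) ≤ 2) :
    ∃ S : Finset (Fin t), (t : ℝ) / (m : ℝ) ^ 2 ≤ (S.card : ℝ) ∧
      ∀ i ∈ S, ∀ j ∈ S, (ZMod.cast (M i j) : ZMod s) = 0 := by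
  have hm0 : (0:ℝ) < (m:ℝ)^2 := by positivity
  have hs0 : s ≠ 0 := by
    rintro rfl
    have := Nat.eq_zero_of_zero_dvd hs
    omega
  haveI : NeZero s := ⟨hs0⟩
  -- trivial case t = 0
  rcases Nat.eq_zero_or_pos t with ht | ht
  · refine ⟨∅, ?_, by simp⟩
    simp [ht]
  -- trivial case s = 1
  rcases eq_or_lt_of_le (Nat.one_le_iff_ne_zero.mpr hs0) with hs1 | hs2
  · refine ⟨Finset.univ, ?_, ?_⟩
    · rw [Finset.card_univ, Fintype.card_fin, div_le_iff₀ hm0]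
      have hm1 : (1:ℝ) ≤ (m:ℝ) := by exact_mod_cast (by omega : 1 ≤ m)
      have h1 : (1:ℝ) ≤ (m:ℝ)^2 := by nlinarith [mul_le_mul hm1 hm1 zero_le_one (by linarith : (0:ℝ) ≤ (m:ℝ))]
      nlinarith [(Nat.cast_nonneg t : (0:ℝ) ≤ (t:ℝ)), mul_le_mul_of_nonneg_left h1 (Nat.cast_nonneg t : (0:ℝ) ≤ (t:ℝ))]
    · intro i _ j _
      haveI : Subsingleton (ZMod s) := by rw [← hs1]; infer_instance
      exact Subsingleton.elim _ _
  -- main case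
  set f : Fin t → (Fin t → ZMod s) := fun j i => (ZMod.cast (M i j) : ZMod s) with hf
  set G : AddSubgroup (Fin t → ZMod s) := AddSubgroup.closure (Set.range f) with hG
  have hcr' : Real.logb (s:ℝ) (((G : Set (Fin t → ZMod s)).ncard : ℝ)) ≤ 2 := by
    have : (Set.range fun j => fun i => (M.map fun x => (ZMod.cast x : ZMod s)) i j)
        = Set.range f := by
      simp [hf, Matrix.map_apply]
    simpa [colrank, hG, this] using hcr
  have hGfin : (G : Set (Fin t → ZMod s)).Finite := Set.toFinite _
  have hGpos : 0 < (G : Set (Fin t → ZMod s)).ncard := by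
    refine Set.ncard_pos hGfin |>.mpr ⟨0, ?_⟩
    exact G.zero_mem
  have hGcard : (G : Set (Fin t → ZMod s)).ncard ≤ s ^ 2 := by
    have h1 : (1:ℝ) < (s:ℝ) := by exact_mod_cast hs2
    have h0 : (0:ℝ) < ((G : Set (Fin t → ZMod s)).ncard : ℝ) := by exact_mod_cast hGpos
    have := (Real.logb_le_iff_le_rpow h1 h0).mp hcr'
    have h2 : (s:ℝ) ^ (2:ℝ) = ((s^2 : ℕ) : ℝ) := by
      rw [show (2:ℝ) = ((2:ℕ):ℝ) by norm_num, Real.rpow_natCast]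
      push_cast; ring
    rw [h2] at this
    exact_mod_cast this
  have hsm : s ≤ m := Nat.le_of_dvd (by omega) hs
  -- pigeonhole
  let T : Finset (Fin t → ZMod s) := Finset.univ.image f
  have hTcard : T.card ≤ m ^ 2 := by
    have hsub : (T : Set (Fin t → ZMod s)) ⊆ (G : Set (Fin t → ZMod s)) := by
      intro v hv
      simp only [T, Finset.coe_image, Set.mem_image] at hv
      obtain ⟨j, _, rfl⟩ := hv
      exact AddSubgroup.subset_closure (Set.mem_range_self j)
    calc T.card = (T : Set (Fin t → ZMod s)).ncard := (Set.ncard_coe_finset T).symm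
      _ ≤ (G : Set (Fin t → ZMod s)).ncard := Set.ncard_le_ncard hsub hGfin
      _ ≤ s ^ 2 := hGcard
      _ ≤ m ^ 2 := Nat.pow_le_pow_left hsm 2
  haveI : Nonempty (Fin t) := ⟨⟨0, ht⟩⟩
  have hTne : T.Nonempty := Finset.Nonempty.image Finset.univ_nonempty f
  obtain ⟨b, hbT, hbmax⟩ := T.exists_max_image
    (fun v => (Finset.univ.filter fun j => f j = v).card) hTne
  refine ⟨Finset.univ.filter fun j => f j = b, ?_, ?_⟩
  · rw [div_le_iff₀ hm0]
    have hsum : t = ∑ v ∈ T, (Finset.univ.filter fun j => f j = v).card := by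
      simpa using Finset.card_eq_sum_card_fiberwise
        (fun x (_ : x ∈ Finset.univ) => Finset.mem_image_of_mem f (Finset.mem_univ x))
    have hle : t ≤ T.card * (Finset.univ.filter fun j => f j = b).card := by
      refine hsum.le.trans ?_
      calc ∑ v ∈ T, (Finset.univ.filter fun j => f j = v).card
          ≤ ∑ _v ∈ T, (Finset.univ.filter fun j => f j = b).card :=
            Finset.sum_le_sum fun v hv => hbmax v hv
        _ = T.card * (Finset.univ.filter fun j => f j = b).card := by
            rw [Finset.sum_const, smul_eq_mul]
    have : t ≤ m ^ 2 * (Finset.univ.filter fun j => f j = b).card :=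
      hle.trans (Nat.mul_le_mul_right _ hTcard)
    calc (t:ℝ) ≤ ((m ^ 2 * (Finset.univ.filter fun j => f j = b).card : ℕ) : ℝ) := by
          exact_mod_cast this
      _ = ((Finset.univ.filter fun j => f j = b).card : ℝ) * (m:ℝ)^2 := by push_cast; ring
  · intro i hi j hj
    simp only [Finset.mem_filter] at hi hj
    have : f i = f j := hi.2.trans hj.2.symm
    have := congrFun this i
    simp only [hf] at this
    rw [← this, hdiag i, ZMod.cast_zero]
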